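/- arXiv:1607.07593 — 2 statements merged into one kernel-verified Lean document; each statement's English description precedes it below -/
import Mathlib

section
/- Let r > 1 be a rational number and let (p_i, q_i, c_i), i = 1, …, N, be a finite family with p_i, q_i positive integers, p_i > q_i, p_i/q_i = r for all i, and c_i ∈ ℂ \ {0}. Let W_i = W_{p_i,q_i,c_i}, let P be the multiset union over i of the q_i-th powers θ^{q_i} of the roots θ of W_i (with multiplicity), let k₁ be the multiplicity of 2 in P, let k₂ be the multiplicity of (r−2)/(r−1) in P, let M be the multiset obtained from P by removing all copies of 2 and of (r−2)/(r−1), and let Π = Σ_{i=1}^N p_i. If M is invariant under the symmetry of ℂ with respect to 1, i.e., the multiset {2 − x : x ∈ M} equals M, then (r−2)·Π = k₂ − k₁·(r−1). -/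
/-! The roots of `W = (r-1)θ^p - rθ^(p-q) + c` have vanishing elementary symmetric functions
`e₁, …, e_{q-1}` (the coefficients between `θ^p` and `θ^(p-q)` vanish) and
`e_q = ± r/(r-1)`, so Newton's identities give `∑ θ^q = q r/(r-1) = p/(r-1)`. Hence `P` has
`Π` elements summing to `Π/(r-1)`. Symmetry about `1` forces `∑ M = #M`, and the removed part
contributes `2k₁ + k₂ (r-2)/(r-1)`; comparing with `#M + k₁ + k₂ = Π` gives the relation. -/

open Polynomial
open scoped Classical

namespace Multiset

theorem sum_map_pow_eq_of_esymm_eq_zero {R : Type*} [CommRing R] (s : Multiset R) {k : ℕ}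
    (hk : 0 < k) (hs : ∀ j, 0 < j → j < k → s.esymm j = 0) :
    (s.map (· ^ k)).sum = (-1) ^ (k + 1) * k * s.esymm k := by
  let f : s → R := (↑)
  have hs_eq : Finset.univ.val.map f = s := map_univ_coe s
  have hpsum : MvPolynomial.aeval f (MvPolynomial.psum s R k) = (s.map (· ^ k)).sum := by
    conv_rhs => rw [← hs_eq, map_map]
    simp [MvPolynomial.psum]
  have hesymm : ∀ n, MvPolynomial.aeval f (MvPolynomial.esymm s R n) = s.esymm n := by
    intro n
    rw [MvPolynomial.aeval_esymm_eq_multiset_esymm, hs_eq]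
  have newton := congrArg (MvPolynomial.aeval f)
    (MvPolynomial.psum_eq_mul_esymm_sub_sum s R k hk)
  rw [hpsum, map_sub, map_mul, map_sum, hesymm] at newton
  rw [newton, Finset.sum_eq_zero fun a ha => ?_]
  · simp
  · simp only [Finset.mem_filter, Set.mem_Ioo] at ha
    rw [map_mul, map_mul, hesymm, hs a.1 ha.2.1 ha.2.2, mul_zero, zero_mul]

theorem sum_map_sub_left {R : Type*} [Ring R] (s : Multiset R) (a : R) :
    (s.map (a - ·)).sum = card s • a - s.sum := by
  rw [sum_map_sub, map_const', sum_replicate, map_id']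

theorem sum_eq_card_of_map_two_sub_eq {K : Type*} [Field K] [CharZero K] {s : Multiset K}
    (hs : s.map (2 - ·) = s) : s.sum = card s := by
  have := congrArg sum hs
  rw [sum_map_sub_left, nsmul_eq_mul] at this
  linear_combination (-1 / 2 : K) * this

theorem filter_add_replicate_count_add_replicate_count {α : Type*} [DecidableEq α]
    (s : Multiset α) {a b : α} (hab : a ≠ b) :
    s.filter (fun x => x ≠ a ∧ x ≠ b) + replicate (s.count a) a + replicate (s.count b) b = s := by
  ext x
  simp only [count_add, count_filter, count_replicate]
  by_cases hxa : x = a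
  · subst hxa; simp [hab, hab.symm]
  · by_cases hxb : x = b
    · subst hxb; simp [hxa, Ne.symm hxa]
    · simp [hxa, hxb, Ne.symm hxa, Ne.symm hxb]

end Multiset

namespace Polynomial

theorem leadingCoeff_mul_sum_roots_pow {R : Type*} [CommRing R] [IsDomain R] {f : R[X]}
    (hroots : f.roots.card = f.natDegree) {q : ℕ} (hq : 0 < q) (hqf : q ≤ f.natDegree)
    (hcoeff : ∀ j, 0 < j → j < q → f.coeff (f.natDegree - j) = 0) :
    f.leadingCoeff * (f.roots.map (· ^ q)).sum = -(q * f.coeff (f.natDegree - q)) := by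
  have hlc : f.leadingCoeff ≠ 0 := leadingCoeff_ne_zero.mpr (by rintro rfl; simp at hqf; omega)
  have vieta : ∀ j ≤ f.natDegree,
      f.coeff (f.natDegree - j) = f.leadingCoeff * (-1) ^ j * f.roots.esymm j := fun j hj => by
    rw [coeff_eq_esymm_roots_of_card hroots (Nat.sub_le _ _), Nat.sub_sub_self hj]
  have hesymm : ∀ j, 0 < j → j < q → f.roots.esymm j = 0 := fun j hj hjq => by
    have := vieta j (by omega)
    rw [hcoeff j hj hjq] at this
    simpa [hlc] using this.symm
  rw [Multiset.sum_map_pow_eq_of_esymm_eq_zero _ hq hesymm, vieta q hqf]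
  ring

theorem trinomial_coeff_eq_zero {R : Type*} [Semiring R] {k m n i : ℕ} {u v w : R}
    (hik : i ≠ k) (him : i ≠ m) (hin : i ≠ n) : (trinomial k m n u v w).coeff i = 0 := by
  simp [trinomial_def, coeff_X_pow, coeff_C_mul, hik, him, hin]

theorem C_mul_X_pow_sub_C_mul_X_pow_add_C_eq_trinomial {R : Type*} [Ring R] (a b c : R)
    (m n : ℕ) : C a * X ^ n - C b * X ^ m + C c = trinomial 0 m n c (-b) a := by
  rw [trinomial_def, C_neg, pow_zero, mul_one, neg_mul]
  abel

section IsAlgClosed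

variable {K : Type*} [Field K] [IsAlgClosed K]

theorem card_roots_trinomial {k m n : ℕ} {u v w : K} (hkm : k < m) (hmn : m < n)
    (hw : w ≠ 0) : (trinomial k m n u v w).roots.card = n := by
  rw [IsAlgClosed.card_roots_eq_natDegree, trinomial_natDegree hkm hmn hw]

theorem mul_sum_roots_pow_trinomial {k m n : ℕ} {u v w : K} (hkm : k < m) (hmn : m < n)
    (hw : w ≠ 0) :
    w * ((trinomial k m n u v w).roots.map (· ^ (n - m))).sum = -((n - m : ℕ) * v) := by
  have hdeg := trinomial_natDegree (u := u) (v := v) hkm hmn hw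
  have key := leadingCoeff_mul_sum_roots_pow (f := trinomial k m n u v w)
    IsAlgClosed.card_roots_eq_natDegree (q := n - m) (by omega) (by omega) fun j hj hjq => by
      rw [hdeg]; exact trinomial_coeff_eq_zero (by omega) (by omega) (by omega)
  rwa [trinomial_leadingCoeff hkm hmn hw, hdeg, Nat.sub_sub_self hmn.le,
    trinomial_middle_coeff hkm hmn] at key

variable {p q : ℕ}

theorem card_roots_C_mul_X_pow_sub_C_mul_X_pow_add_C (hq : 0 < q) (hqp : q < p) {a : K}
    (ha : a ≠ 0) (b c : K) : (C a * X ^ p - C b * X ^ (p - q) + C c).roots.card = p := by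
  rw [C_mul_X_pow_sub_C_mul_X_pow_add_C_eq_trinomial]
  exact card_roots_trinomial (Nat.sub_pos_of_lt hqp) (Nat.sub_lt (hq.trans hqp) hq) ha

theorem sub_one_mul_sum_roots_pow_eq (hq : 0 < q) (hqp : q < p) {r : K} (hr : r - 1 ≠ 0)
    (hqr : q * r = p) (c : K) :
    (r - 1) * ((C (r - 1) * X ^ p - C r * X ^ (p - q) + C c).roots.map (· ^ q)).sum = p := by
  have key := mul_sum_roots_pow_trinomial (u := c) (v := -r)
    (Nat.sub_pos_of_lt hqp) (Nat.sub_lt (hq.trans hqp) hq) hr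
  rw [Nat.sub_sub_self hqp.le, ← C_mul_X_pow_sub_C_mul_X_pow_add_C_eq_trinomial] at key
  rw [key, mul_neg, neg_neg, hqr]

end IsAlgClosed

end Polynomial

theorem symmetric_root_powers_imply_count_relation_general
    (N : ℕ) (r : ℚ) (hr : 1 < r)
    (p q : Fin N → ℕ) (c : Fin N → ℂ)
    (hq : ∀ i, 1 ≤ q i) (hpq : ∀ i, q i < p i)
    (hratio : ∀ i, (p i : ℚ) / (q i : ℚ) = r)
    (W : Fin N → Polynomial ℂ)
    (hW : ∀ i, W i = Polynomial.C ((r : ℂ) - 1) * X ^ (p i)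
        - Polynomial.C (r : ℂ) * X ^ (p i - q i) + Polynomial.C (c i))
    (P : Multiset ℂ) (hP : P = ∑ i, ((W i).roots.map (fun θ : ℂ => θ ^ (q i))))
    (k₁ k₂ : ℕ) (hk₁ : k₁ = P.count 2)
    (hk₂ : k₂ = P.count (((r : ℂ) - 2) / ((r : ℂ) - 1)))
    (M : Multiset ℂ)
    (hM : M = P.filter (fun x : ℂ => x ≠ 2 ∧ x ≠ ((r : ℂ) - 2) / ((r : ℂ) - 1)))
    (hsym : M.map (fun x : ℂ => 2 - x) = M)
    (Pi : ℕ) (hPi : Pi = ∑ i, p i) :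
    ((r : ℂ) - 2) * (Pi : ℂ) = (k₂ : ℂ) - (k₁ : ℂ) * ((r : ℂ) - 1) := by
  have hr1 : (r : ℂ) - 1 ≠ 0 := sub_ne_zero.mpr (by exact_mod_cast hr.ne')
  have hb : (2 : ℂ) ≠ ((r : ℂ) - 2) / ((r : ℂ) - 1) := by
    rw [ne_eq, eq_div_iff hr1]
    exact_mod_cast (by linarith : (2 * (r - 1) : ℚ) ≠ r - 2)
  have hqr : ∀ i, (q i : ℂ) * r = p i := fun i => by
    have h := hratio i
    rw [div_eq_iff (by exact_mod_cast Nat.one_le_iff_ne_zero.mp (hq i))] at h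
    exact_mod_cast (by linarith : (q i : ℚ) * r = p i)
  have hcard : P.card = Pi := by
    simp only [hP, hPi, Multiset.card_sum, Multiset.card_map, hW]
    exact Finset.sum_congr rfl fun i _ =>
      card_roots_C_mul_X_pow_sub_C_mul_X_pow_add_C (hq i) (hpq i) hr1 _ _
  have hsum : ((r : ℂ) - 1) * P.sum = Pi := by
    simp only [hP, hPi, Multiset.sum_sum, Finset.mul_sum, hW, Nat.cast_sum]
    exact Finset.sum_congr rfl fun i _ => sub_one_mul_sum_roots_pow_eq (hq i) (hpq i) hr1 (hqr i) _
  have hdecomp := P.filter_add_replicate_count_add_replicate_count hb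
  rw [← hM, ← hk₁, ← hk₂] at hdecomp
  rw [← hdecomp] at hcard hsum
  simp only [Multiset.card_add, Multiset.card_replicate, Multiset.sum_add,
    Multiset.sum_replicate, Multiset.sum_eq_card_of_map_two_sub_eq hsym, nsmul_eq_mul] at hcard hsum
  rw [← hcard] at hsum ⊢
  field_simp at hsum
  push_cast at hsum ⊢
  linear_combination hsum

/-- Given a family `W_i(θ) = (r-1)θ^{p_i} - r θ^{p_i-q_i} + c_i` with `p_i/q_i = r > 1`
and `c_i ≠ 0`, let `P` be the multiset of the `q_i`-th powers of the roots of the `W_i`,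
`k₁` the multiplicity of `2` in `P`, `k₂` the multiplicity of `(r-2)/(r-1)` in `P`, and
`M` the multiset obtained from `P` by removing all copies of `2` and `(r-2)/(r-1)`.
If `M` is invariant under the symmetry `x ↦ 2 - x` of `ℂ` with respect to `1`, then
`(r-2)·Π = k₂ - k₁·(r-1)` where `Π = Σ p_i`. -/
theorem symmetric_root_powers_imply_count_relation
    (N : ℕ) (hN : 0 < N) (r : ℚ) (hr : 1 < r)
    (p q : Fin N → ℕ) (c : Fin N → ℂ)
    (hq : ∀ i, 1 ≤ q i) (hpq : ∀ i, q i < p i)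
    (hratio : ∀ i, (p i : ℚ) / (q i : ℚ) = r)
    (hc : ∀ i, c i ≠ 0)
    (W : Fin N → Polynomial ℂ)
    (hW : ∀ i, W i = Polynomial.C ((r : ℂ) - 1) * X ^ (p i)
        - Polynomial.C (r : ℂ) * X ^ (p i - q i) + Polynomial.C (c i))
    (P : Multiset ℂ) (hP : P = ∑ i, ((W i).roots.map (fun θ : ℂ => θ ^ (q i))))
    (k₁ k₂ : ℕ) (hk₁ : k₁ = P.count 2)
    (hk₂ : k₂ = P.count (((r : ℂ) - 2) / ((r : ℂ) - 1)))
    (M : Multiset ℂ)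
    (hM : M = P.filter (fun x : ℂ => x ≠ 2 ∧ x ≠ ((r : ℂ) - 2) / ((r : ℂ) - 1)))
    (hsym : M.map (fun x : ℂ => 2 - x) = M)
    (Pi : ℕ) (hPi : Pi = ∑ i, p i) :
    ((r : ℂ) - 2) * (Pi : ℂ) = (k₂ : ℂ) - (k₁ : ℂ) * ((r : ℂ) - 1) :=
  symmetric_root_powers_imply_count_relation_general N r hr p q c hq hpq hratio W hW P hP k₁ k₂ hk₁
    hk₂ M hM hsym Pi hPi
end

section
/- Let p > q ≥ 1 be integers with r = p/q ≠ 2, let c ∈ ℂ \ {0}, and let W(θ) = (r−1)·θ^p − r·θ^{p−q} + c ∈ ℂ[θ] (with r viewed as a complex number). Let v be either of the two values 2 or (r−2)/(r−1). Then every root θ of W satisfying θ^q = v is a simple root of W, and the number of roots θ of W with θ^q = v is at most gcd(p, q). -/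
open Polynomial
open scoped Classical

/-!
On the locus `θ ^ q = v` the polynomial `W` collapses to `((r - 1) v - r) θ ^ (p - q) + c`
and its derivative to `θ ^ (p - q - 1) · p (r - 1) (v - 1)`. For the two given values of `v`
the factors `(r - 1) v - r` and `v - 1` are nonzero, so such roots are simple, and all of
them satisfy both `θ ^ q = v` and `θ ^ (p - q) = -c / ((r - 1) v - r)`. Any two such roots
therefore differ by a root of unity of order dividing `gcd (p - q) q = gcd p q`.
-/

theorem Finset.card_le_gcd_of_forall_pow_eq {K : Type*} [Field K] {m n : ℕ} (hn : 0 < n)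
    {a b : K} (hb : b ≠ 0) (S : Finset K) (hS : ∀ x ∈ S, x ^ m = a ∧ x ^ n = b) :
    S.card ≤ m.gcd n := by
  obtain rfl | ⟨x₀, hx₀⟩ := S.eq_empty_or_nonempty
  · simp
  obtain ⟨hx₀m, hx₀n⟩ := hS x₀ hx₀
  have hx₀ : x₀ ≠ 0 := by
    rintro rfl
    exact hb (by rw [← hx₀n, zero_pow hn.ne'])
  have hsub : S ⊆ (nthRoots (m.gcd n) (x₀ ^ m.gcd n)).toFinset := by
    intro x hx
    obtain ⟨hxm, hxn⟩ := hS x hx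
    have hunit : (x / x₀) ^ m.gcd n = 1 := by
      refine pow_gcd_eq_one.mpr ⟨?_, ?_⟩
      · rw [div_pow, hxm, ← hx₀m, div_self (pow_ne_zero _ hx₀)]
      · rw [div_pow, hxn, ← hx₀n, div_self (pow_ne_zero _ hx₀)]
    rw [Multiset.mem_toFinset, mem_nthRoots (Nat.gcd_pos_of_pos_right m hn),
      ← div_eq_one_iff_eq (pow_ne_zero _ hx₀), ← div_pow, hunit]
  calc S.card ≤ (nthRoots (m.gcd n) (x₀ ^ m.gcd n)).toFinset.card := card_le_card hsub
    _ ≤ Multiset.card (nthRoots (m.gcd n) (x₀ ^ m.gcd n)) := Multiset.toFinset_card_le _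
    _ ≤ m.gcd n := card_nthRoots _ _

namespace Polynomial

variable {R : Type*} [CommRing R] {p q : ℕ} {a b c θ v : R}

theorem eval_trinomial_of_pow_eq (hqp : q ≤ p) (hθ : θ ^ q = v) :
    (C a * X ^ p - C b * X ^ (p - q) + C c).eval θ = (a * v - b) * θ ^ (p - q) + c := by
  have hsplit : θ ^ p = θ ^ (p - q) * θ ^ q := by rw [← pow_add, Nat.sub_add_cancel hqp]
  simp only [eval_add, eval_sub, eval_mul, eval_pow, eval_C, eval_X, hsplit, hθ]
  ring

theorem eval_derivative_trinomial_of_pow_eq (hqp : q < p) (hθ : θ ^ q = v) :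
    (derivative (C a * X ^ p - C b * X ^ (p - q) + C c)).eval θ =
      θ ^ (p - q - 1) * (a * p * v - b * (p - q)) := by
  have hsplit : θ ^ (p - 1) = θ ^ (p - q - 1) * θ ^ q := by rw [← pow_add]; congr 1; omega
  simp only [derivative_add, derivative_sub, derivative_C, derivative_C_mul, derivative_X_pow,
    eval_add, eval_sub, eval_mul, eval_pow, eval_C, eval_X, eval_zero,
    Nat.cast_sub hqp.le, hsplit, hθ]
  ring

end Polynomial

section ExceptionalValues

variable {K : Type*} [Field K] [CharZero K] {r v : K}

theorem ne_zero_of_eq_two_or_eq_sub_two_div_sub_one (hr1 : r ≠ 1) (hr2 : r ≠ 2)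
    (hv : v = 2 ∨ v = (r - 2) / (r - 1)) : v ≠ 0 := by
  rcases hv with rfl | rfl
  · exact two_ne_zero
  · exact div_ne_zero (sub_ne_zero.mpr hr2) (sub_ne_zero.mpr hr1)

theorem ne_one_of_eq_two_or_eq_sub_two_div_sub_one (hr1 : r ≠ 1)
    (hv : v = 2 ∨ v = (r - 2) / (r - 1)) : v ≠ 1 := by
  rcases hv with rfl | rfl
  · norm_num
  · rw [Ne, div_eq_one_iff_eq (sub_ne_zero.mpr hr1)]
    norm_num

theorem sub_one_mul_sub_ne_zero_of_eq_two_or_eq_sub_two_div_sub_one (hr1 : r ≠ 1)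
    (hr2 : r ≠ 2) (hv : v = 2 ∨ v = (r - 2) / (r - 1)) : (r - 1) * v - r ≠ 0 := by
  rcases hv with rfl | rfl
  · rw [show (r - 1) * 2 - r = r - 2 by ring]
    exact sub_ne_zero.mpr hr2
  · rw [mul_div_cancel₀ _ (sub_ne_zero.mpr hr1)]
    norm_num

end ExceptionalValues

theorem roots_with_prescribed_qth_power_bound_general
    (p q : ℕ) (hq : 1 ≤ q) (hpq : q < p) (hne2 : p ≠ 2 * q)
    (c : ℂ)
    (r : ℂ) (hr : r = (p : ℂ) / (q : ℂ))
    (W : Polynomial ℂ)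
    (hW : W = Polynomial.C (r - 1) * X ^ p - Polynomial.C r * X ^ (p - q)
        + Polynomial.C c)
    (v : ℂ) (hv : v = 2 ∨ v = (r - 2) / (r - 1)) :
    (∀ θ : ℂ, W.eval θ = 0 → θ ^ q = v → W.derivative.eval θ ≠ 0) ∧
      (W.roots.toFinset.filter (fun θ : ℂ => θ ^ q = v)).card ≤ Nat.gcd p q := by
  have hq0 : (q : ℂ) ≠ 0 := Nat.cast_ne_zero.mpr (by omega)
  have hrq : r * q = p := by rw [hr, div_mul_cancel₀ _ hq0]
  have hr1 : r ≠ 1 := by rintro rfl; exact hpq.ne' (by exact_mod_cast hrq.symm.trans (one_mul _))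
  have hr2 : r ≠ 2 := by rintro rfl; exact hne2 (by exact_mod_cast hrq.symm)
  have hv0 := ne_zero_of_eq_two_or_eq_sub_two_div_sub_one hr1 hr2 hv
  have hv1 := ne_one_of_eq_two_or_eq_sub_two_div_sub_one hr1 hv
  have hk := sub_one_mul_sub_ne_zero_of_eq_two_or_eq_sub_two_div_sub_one hr1 hr2 hv
  constructor
  · intro θ _ hθ
    rw [hW, eval_derivative_trinomial_of_pow_eq hpq hθ,
      show (r - 1) * p * v - r * (p - q) = (r - 1) * p * (v - 1) by linear_combination hrq]
    have hθ0 : θ ≠ 0 := by rintro rfl; exact hv0 (by rw [← hθ, zero_pow (by omega)])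
    exact mul_ne_zero (pow_ne_zero _ hθ0) (mul_ne_zero (mul_ne_zero (sub_ne_zero.mpr hr1)
      (Nat.cast_ne_zero.mpr (by omega))) (sub_ne_zero.mpr hv1))
  · rw [← Nat.gcd_sub_self_left hpq.le]
    refine Finset.card_le_gcd_of_forall_pow_eq (a := -c / ((r - 1) * v - r)) hq hv0 _ ?_
    intro θ hθ
    obtain ⟨hroot, hθq⟩ := Finset.mem_filter.mp hθ
    have hWθ := (mem_roots'.mp (Multiset.mem_toFinset.mp hroot)).2
    rw [IsRoot, hW, eval_trinomial_of_pow_eq hpq.le hθq] at hWθ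
    exact ⟨by rw [eq_div_iff hk]; linear_combination hWθ, hθq⟩

/-- For `W(θ) = (r-1)θ^p - r θ^{p-q} + c` with `r = p/q ≠ 2` and `c ≠ 0`, and for `v`
either of the values `2` and `(r-2)/(r-1)`: every root `θ` of `W` with `θ^q = v` is a
simple root, and the number of such roots is at most `gcd(p, q)`. -/
theorem roots_with_prescribed_qth_power_bound
    (p q : ℕ) (hq : 1 ≤ q) (hpq : q < p) (hne2 : p ≠ 2 * q)
    (c : ℂ) (hc : c ≠ 0)
    (r : ℂ) (hr : r = (p : ℂ) / (q : ℂ))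
    (W : Polynomial ℂ)
    (hW : W = Polynomial.C (r - 1) * X ^ p - Polynomial.C r * X ^ (p - q)
        + Polynomial.C c)
    (v : ℂ) (hv : v = 2 ∨ v = (r - 2) / (r - 1)) :
    (∀ θ : ℂ, W.eval θ = 0 → θ ^ q = v → W.derivative.eval θ ≠ 0) ∧
      (W.roots.toFinset.filter (fun θ : ℂ => θ ^ q = v)).card ≤ Nat.gcd p q :=
  roots_with_prescribed_qth_power_bound_general p q hq hpq hne2 c r hr W hW v hv
end
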